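/- Let d ≥ 3 and let S ⊂ Sol_d be the symmetric set consisting of the images of x_1,…,x_d and their inverses. There exists a nonconstant bounded μ-harmonic function on Sol_d, where μ is the uniform measure on S; i.e., there is a bounded nonconstant h : Sol_d → ℝ with h(g) = (2d)^{−1} Σ_{s∈S} h(gs) for all g ∈ Sol_d. -/

import Mathlib

set_option maxHeartbeats 2000000

/-- The free metabelian group on `d` generators: `F_d / F_d''`. -/
abbrev Sold (d : ℕ) : Type :=
  FreeGroup (Fin d) ⧸ derivedSeries (FreeGroup (Fin d)) 2

instance (d : ℕ) : (derivedSeries (FreeGroup (Fin d)) 2).Normal :=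
  derivedSeries_normal _ _

/-- The `2d` elements of the symmetric generating set of `Sol_d`: the images of the free
generators `x_i` and of their inverses. -/
def solGen (d : ℕ) (s : Fin d × Bool) : Sold d :=
  if s.2 then QuotientGroup.mk (FreeGroup.of s.1)
  else QuotientGroup.mk (FreeGroup.of s.1)⁻¹


lemma lcore_aux {r p m t : ℝ} (hr : 0 < r) (hp : 0 < p) (hm : 0 < m)
    (hp4 : p ^ 4 = r ^ 4 + t) (hm4 : m ^ 4 = r ^ 4 - t)
    (ht0 : 0 ≤ t) (ht : 100 * t ≤ r ^ 4) :
    1 / p + 1 / m ≤ 2 / r + (3/8) * t ^ 2 / r ^ 9 := by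
  have h4 : (4:ℕ) ≠ 0 := by norm_num
  have hmr : m ≤ r := by
    rw [← pow_le_pow_iff_left₀ hm.le hr.le h4]; nlinarith
  have hrp : r ≤ p := by
    rw [← pow_le_pow_iff_left₀ hr.le hp.le h4]; nlinarith
  have hmlow : (997/1000) * r ≤ m := by
    rw [← pow_le_pow_iff_left₀ (by positivity) hm.le h4]; nlinarith
  have hphigh : p ≤ (1003/1000) * r := by
    rw [← pow_le_pow_iff_left₀ hp.le (by positivity) h4]; nlinarith
  set S1 : ℝ := r^3 + r^2*m + r*m^2 + m^3 with hS1def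
  set S2 : ℝ := p^3 + p^2*r + p*r^2 + r^3 with hS2def
  have hS1pos : 0 < S1 := by positivity
  have hS2pos : 0 < S2 := by positivity
  have hS1 : (r - m) * S1 = t := by rw [hS1def]; linear_combination -hm4
  have hS2 : (p - r) * S2 = t := by rw [hS2def]; linear_combination hp4
  have hS1lb : (396/100) * r^3 ≤ S1 := by
    rw [hS1def]
    nlinarith [mul_le_mul_of_nonneg_left hmlow (sq_nonneg r),
      mul_le_mul_of_nonneg_left (mul_le_mul hmlow hmlow (by positivity) hm.le) hr.le,
      pow_le_pow_left₀ (by positivity) hmlow 3, hr.le, hm.le]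
  have hS2lb : 4 * r^3 ≤ S2 := by
    rw [hS2def]
    nlinarith [pow_le_pow_left₀ hr.le hrp 3,
      mul_le_mul_of_nonneg_right (mul_le_mul hrp hrp hr.le hp.le) hr.le,
      mul_le_mul_of_nonneg_right hrp (sq_nonneg r)]
  have hrm : r - m = t / S1 := by
    rw [eq_div_iff hS1pos.ne']; exact hS1
  have hpr : p - r = t / S2 := by
    rw [eq_div_iff hS2pos.ne']; exact hS2
  have hpm : p - m ≤ (503/1000) * t / r^3 := by
    have h1 : t / S1 ≤ t / ((396/100) * r^3) :=
      div_le_div_of_nonneg_left ht0 (by positivity) hS1lb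
    have h2 : t / S2 ≤ t / (4 * r^3) :=
      div_le_div_of_nonneg_left ht0 (by positivity) hS2lb
    have hsplit : p - m = t / S1 + t / S2 := by linarith [hrm, hpr]
    rw [hsplit]
    have e0 : t / ((396/100) * r^3) + t / (4 * r^3) = (100/396 + 1/4) * (t / r^3) := by
      field_simp
    have e2 : (100/396 + 1/4 : ℝ) * (t / r^3) ≤ (503/1000) * t / r^3 := by
      rw [mul_div_assoc]
      have htr : (0:ℝ) ≤ t / r^3 := by positivity
      nlinarith [htr]
    linarith [e0.le, e0.ge, h1, h2, e2]
  have hpm0 : 0 ≤ p - m := by linarith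
  have hN : p * S2 - m * S1 = 2*t + r*(p^3 - m^3) + r^2*(p^2-m^2) + r^3*(p-m) := by
    rw [hS1def, hS2def]; linear_combination hp4 - hm4
  have hp3m3 : p^3 - m^3 ≤ (302/100) * r^2 * (p - m) := by
    have e : p^3 - m^3 = (p^2 + p*m + m^2) * (p - m) := by ring
    rw [e]
    have hb : p^2 + p*m + m^2 ≤ (302/100) * r^2 := by
      nlinarith [mul_le_mul hphigh hphigh hp.le (by positivity : (0:ℝ) ≤ (1003/1000)*r),
        mul_le_mul hphigh hmr hm.le (by positivity : (0:ℝ) ≤ (1003/1000)*r),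
        mul_le_mul hmr hmr hm.le hr.le]
    exact mul_le_mul_of_nonneg_right hb hpm0
  have hp2m2 : p^2 - m^2 ≤ (2003/1000) * r * (p - m) := by
    have e : p^2 - m^2 = (p + m) * (p - m) := by ring
    rw [e]
    exact mul_le_mul_of_nonneg_right (by linarith) hpm0
  have hC : r^3*(p-m) ≤ (503/1000)*t := by
    have h := mul_le_mul_of_nonneg_left hpm (pow_pos hr 3).le
    have e : r^3 * ((503/1000)*t/r^3) = (503/1000)*t := by field_simp
    linarith [h, e.le]
  have hA : r*(p^3-m^3) ≤ (302/100)*(r^3*(p-m)) := by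
    nlinarith [mul_le_mul_of_nonneg_left hp3m3 hr.le]
  have hB : r^2*(p^2-m^2) ≤ (2003/1000)*(r^3*(p-m)) := by
    nlinarith [mul_le_mul_of_nonneg_left hp2m2 (sq_nonneg r)]
  have hNle : p*S2 - m*S1 ≤ (5031/1000)*t := by
    rw [hN]; linarith [hA, hB, hC]
  have hD : (157/10) * r^9 ≤ m * p * r * S1 * S2 := by
    have h1 : ((997/1000)*r) * r * r * ((396/100)*r^3) * (4*r^3) ≤ m * p * r * S1 * S2 := by
      gcongr <;> first | positivity | exact hrp
    nlinarith [pow_pos hr 9, h1]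
  -- main identity and final bound
  have d1 : 1/p + 1/m - 2/r = (r-m)/(m*r) - (p-r)/(p*r) := by
    field_simp; ring
  have d2 : (r-m)/(m*r) = t/(S1*(m*r)) := by rw [hrm, div_div]
  have d3 : (p-r)/(p*r) = t/(S2*(p*r)) := by rw [hpr, div_div]
  have d4 : t/(S1*(m*r)) - t/(S2*(p*r))
      = (t*(S2*(p*r)) - S1*(m*r)*t)/((S1*(m*r))*(S2*(p*r))) :=
    div_sub_div _ _ (by positivity) (by positivity)
  have hD' : (157/10)*r^10 ≤ (S1*(m*r))*(S2*(p*r)) := by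
    have h := mul_le_mul_of_nonneg_right hD hr.le
    have e1 : (157/10:ℝ)*r^9*r = (157/10)*r^10 := by ring
    have e2 : m*p*r*S1*S2*r = (S1*(m*r))*(S2*(p*r)) := by ring
    linarith [h, e1.le, e1.ge, e2.le, e2.ge]
  have hnum : t*(S2*(p*r)) - S1*(m*r)*t ≤ (5031/1000)*t^2*r := by
    have h := mul_le_mul_of_nonneg_left hNle (mul_nonneg ht0 hr.le)
    have e1 : t*(S2*(p*r)) - S1*(m*r)*t = (t*r)*(p*S2 - m*S1) := by ring
    have e2 : (t*r)*((5031/1000)*t) = (5031/1000)*t^2*r := by ring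
    linarith [h, e1.le, e1.ge, e2.le, e2.ge]
  have hfinal : (t*(S2*(p*r)) - S1*(m*r)*t)/((S1*(m*r))*(S2*(p*r))) ≤ (3/8)*t^2/r^9 := by
    rw [div_le_div_iff₀ (by positivity) (by positivity)]
    have hx : (0:ℝ) ≤ t^2 * r^10 := by positivity
    have step1 : (t*(S2*(p*r)) - S1*(m*r)*t) * r^9 ≤ ((5031/1000)*t^2*r) * r^9 :=
      mul_le_mul_of_nonneg_right hnum (by positivity)
    have step2 : ((5031/1000)*t^2*r) * r^9 ≤ (3/8)*t^2*((157/10)*r^10) := by nlinarith [hx]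
    have step3 : (3/8)*t^2*((157/10)*r^10) ≤ (3/8)*t^2*((S1*(m*r))*(S2*(p*r))) :=
      mul_le_mul_of_nonneg_left hD' (by positivity)
    calc (t*(S2*(p*r)) - S1*(m*r)*t) * r^9 ≤ ((5031/1000)*t^2*r) * r^9 := step1
      _ ≤ (3/8)*t^2*((157/10)*r^10) := step2
      _ ≤ (3/8)*t^2*((S1*(m*r))*(S2*(p*r))) := step3
  linarith [d1.le, d1.ge, d2.le, d2.ge, d3.le, d3.ge, d4.le, d4.ge, hfinal]

noncomputable def qrt (t : ℝ) : ℝ := t ^ ((4:ℝ)⁻¹)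

lemma qrt_pos {t : ℝ} (ht : 0 < t) : 0 < qrt t := Real.rpow_pos_of_pos ht _

lemma qrt_pow {t : ℝ} (ht : 0 < t) : (qrt t) ^ (4:ℕ) = t := by
  rw [qrt, ← Real.rpow_natCast (t ^ ((4:ℝ)⁻¹)) 4, ← Real.rpow_mul ht.le]
  norm_num

section
variable {d : ℕ}

def Qv (x : Fin d → ℤ) : ℝ := ∑ i, ((x i : ℝ))^2

lemma Qv_nonneg (x : Fin d → ℤ) : 0 ≤ Qv x :=
  Finset.sum_nonneg fun _ _ => sq_nonneg _

lemma Qv_add_single (x : Fin d → ℤ) (i : Fin d) (e : ℤ) :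
    Qv (x + Pi.single i e) = Qv x + 2*(e:ℝ)*((x i : ℝ)) + (e:ℝ)^2 := by
  classical
  set p : Fin d → ℤ := Pi.single i e with hp
  unfold Qv
  have h : ∀ j, (((x + p) j : ℝ))^2
      = ((x j : ℝ))^2 + (2*((x j:ℝ))*((p j : ℤ):ℝ) + ((p j : ℤ):ℝ)^2) := by
    intro j; rw [Pi.add_apply]; push_cast; ring
  have h2 : ∑ j, (2*((x j:ℝ))*((p j : ℤ):ℝ) + ((p j : ℤ):ℝ)^2) = 2*(e:ℝ)*((x i:ℝ)) + (e:ℝ)^2 := by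
    rw [Finset.sum_eq_single i]
    · simp only [hp, Pi.single_eq_same]; ring
    · intro j _ hj; simp only [hp, Pi.single_eq_of_ne hj]; push_cast; ring
    · intro hi; exact absurd (Finset.mem_univ i) hi
  rw [Finset.sum_congr rfl (fun j _ => h j), Finset.sum_add_distrib, h2]
  ring

def stepv (s : Fin d × Bool) : Fin d → ℤ :=
  if s.2 then Pi.single s.1 1 else -Pi.single s.1 1

lemma stepv_eq (s : Fin d × Bool) :
    stepv s = Pi.single s.1 (if s.2 then (1:ℤ) else -1) := by
  unfold stepv
  rcases s with ⟨i, b⟩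
  cases b
  · simp only [Bool.false_eq_true, if_false]
    funext j
    by_cases hj : j = i
    · subst hj; simp [Pi.single_eq_same]
    · simp [Pi.single_eq_of_ne hj]
  · simp

lemma Qv_add_step (x : Fin d → ℤ) (s : Fin d × Bool) :
    Qv (x + stepv s) = Qv x + 2*(if s.2 then (1:ℝ) else -1)*((x s.1 : ℝ)) + 1 := by
  rw [stepv_eq, Qv_add_single]
  cases s.2 <;> norm_num

noncomputable def upot (x : Fin d → ℤ) : ℝ := 1 / qrt (Qv x + 10000)

lemma upot_pos (x : Fin d → ℤ) : 0 < upot x := by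
  have : (0:ℝ) < Qv x + 10000 := by linarith [Qv_nonneg x]
  exact div_pos one_pos (qrt_pos this)

noncomputable def del0 : ℝ := 1/qrt 10000 - 1/qrt 10001

end


lemma bern {a b : ℝ} (ha : 0 < a) (hb : 0 < b) (h : b ^ 4 = a ^ 4 + 1) :
    1 / (4 * a * b ^ 4) ≤ 1 / a - 1 / b := by
  have hab : a ≤ b := by
    rw [← pow_le_pow_iff_left₀ ha.le hb.le (by norm_num : (4:ℕ) ≠ 0)]
    nlinarith
  have hS : (b - a) * (b^3 + b^2*a + b*a^2 + a^3) = 1 := by ring_nf; nlinarith [h]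
  have ha2 : a^2 ≤ b^2 := by nlinarith
  have ha3 : a^3 ≤ b^3 := by nlinarith
  have hSle : b^3 + b^2*a + b*a^2 + a^3 ≤ 4 * b^3 := by
    nlinarith [mul_le_mul_of_nonneg_left hab (sq_nonneg b), mul_le_mul_of_nonneg_left ha2 hb.le]
  have hba : 1 / (4 * b^3) ≤ b - a := by
    rw [div_le_iff₀ (by positivity)]
    nlinarith [hS, hSle, sub_nonneg.mpr hab]
  have key : a * b ≤ (b - a) * (4 * a * b ^ 4) := by
    have h2 := mul_le_mul_of_nonneg_right hba (show (0:ℝ) ≤ 4*a*b^4 by positivity)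
    calc a*b = (1/(4*b^3))*(4*a*b^4) := by field_simp
    _ ≤ _ := h2
  have h1 : 1 / a - 1 / b = (b - a) / (a * b) := by field_simp
  rw [h1, div_le_div_iff₀ (by positivity) (by positivity)]
  nlinarith [key]

lemma lcore {r p m t : ℝ} (hr : 0 < r) (hp : 0 < p) (hm : 0 < m)
    (hp4 : p ^ 4 = r ^ 4 + t) (hm4 : m ^ 4 = r ^ 4 - t)
    (ht : 100 * |t| ≤ r ^ 4) :
    1 / p + 1 / m ≤ 2 / r + (3/8) * t ^ 2 / r ^ 9 := by
  rcases le_or_gt 0 t with h | h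
  · rw [abs_of_nonneg h] at ht
    exact lcore_aux hr hp hm hp4 hm4 h ht
  · rw [abs_of_neg h] at ht
    have h2 := lcore_aux (t := -t) hr hm hp (by linarith [hm4]) (by linarith [hp4]) (by linarith) (by linarith)
    have e : (-t)^2 = t^2 := by ring
    rw [e] at h2
    linarith [h2]

section
variable {d : ℕ}

lemma Qv_le_A (x : Fin d → ℤ) (i : Fin d) : ((x i : ℝ))^2 ≤ Qv x := by
  exact Finset.single_le_sum (fun j _ => sq_nonneg ((x j : ℝ))) (Finset.mem_univ i)

lemma sum_step_upot_le (hd : 3 ≤ d) (x : Fin d → ℤ) :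
    (∑ s : Fin d × Bool, upot (x + stepv s))
      ≤ 2*d*upot x - (if x = 0 then 2*d*del0 else 0) := by
  classical
  have hQ : 0 ≤ Qv x := Qv_nonneg x
  set A : ℝ := Qv x + 10001 with hAdef
  have hA : (0:ℝ) < A := by rw [hAdef]; linarith
  set r : ℝ := qrt A with hrdef
  have hr : 0 < r := qrt_pos hA
  have hr4 : r ^ 4 = A := qrt_pow hA
  -- per-coordinate estimate
  have key : ∀ i : Fin d,
      upot (x + stepv (i, true)) + upot (x + stepv (i, false))
        ≤ 2/r + (3/8)*(2*((x i:ℝ)))^2/r^9 := by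
    intro i
    set t : ℝ := 2*((x i:ℝ)) with htdef
    have hxi := Qv_le_A x i
    have hAp : (0:ℝ) < A + t := by
      rw [hAdef, htdef]; nlinarith [sq_nonneg ((x i:ℝ) + 1), hxi]
    have hAm : (0:ℝ) < A - t := by
      rw [hAdef, htdef]; nlinarith [sq_nonneg ((x i:ℝ) - 1), hxi]
    have hp : 0 < qrt (A + t) := qrt_pos hAp
    have hm : 0 < qrt (A - t) := qrt_pos hAm
    have e1 : Qv (x + stepv (i, true)) + 10000 = A + t := by
      rw [Qv_add_step, hAdef, htdef]; simp; ring
    have e2 : Qv (x + stepv (i, false)) + 10000 = A - t := by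
      rw [Qv_add_step, hAdef, htdef]; simp; ring
    have u1 : upot (x + stepv (i, true)) = 1 / qrt (A + t) := by
      unfold upot; rw [e1]
    have u2 : upot (x + stepv (i, false)) = 1 / qrt (A - t) := by
      unfold upot; rw [e2]
    rw [u1, u2]
    have habs : 100 * |t| ≤ r ^ 4 := by
      rw [hr4, hAdef, htdef, abs_mul, abs_two, ← sq_abs ((x i:ℝ))] at *
      nlinarith [sq_nonneg (|((x i:ℝ))| - 100), abs_nonneg ((x i:ℝ)), hxi]
    exact lcore hr hp hm (by rw [qrt_pow hAp, hr4]) (by rw [qrt_pow hAm, hr4]) habs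
  -- sum over all generators
  have hsum : (∑ s : Fin d × Bool, upot (x + stepv s))
      ≤ 2*d/r + (3/2)*(Qv x)/r^9 := by
    rw [Fintype.sum_prod_type]
    have hb : ∀ i : Fin d, (∑ b : Bool, upot (x + stepv (i, b)))
        = upot (x + stepv (i, true)) + upot (x + stepv (i, false)) := by
      intro i; rw [Fintype.sum_bool]
    rw [Finset.sum_congr rfl (fun i _ => hb i)]
    have hle := Finset.sum_le_sum (fun i (_ : i ∈ Finset.univ) => key i)
    refine hle.trans ?_
    rw [Finset.sum_add_distrib, Finset.sum_const, Finset.card_univ, Fintype.card_fin]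
    have e3 : (∑ i : Fin d, (3/8)*(2*((x i:ℝ)))^2/r^9) = (3/2)*(Qv x)/r^9 := by
      have hterm : ∀ i ∈ Finset.univ, (3/8)*(2*((x i:ℝ)))^2/r^9 = ((x i:ℝ))^2 * ((3/2)/r^9) :=
        fun i _ => by ring
      rw [Finset.sum_congr rfl hterm, ← Finset.sum_mul]
      unfold Qv
      ring
    rw [e3]
    simp only [nsmul_eq_mul]
    apply le_of_eq
    ring
  by_cases hx : x = 0
  · -- exact computation at the origin
    subst hx
    have hQ0 : Qv (0 : Fin d → ℤ) = 0 := by simp [Qv]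
    have hterm : ∀ s : Fin d × Bool, upot ((0 : Fin d → ℤ) + stepv s) = 1/qrt 10001 := by
      intro s
      unfold upot
      rw [Qv_add_step, hQ0]
      simp
      norm_num
    rw [Finset.sum_congr rfl (fun s _ => hterm s), Finset.sum_const, Finset.card_univ]
    have hcard : Fintype.card (Fin d × Bool) = 2*d := by
      rw [Fintype.card_prod, Fintype.card_fin, Fintype.card_bool]; ring
    rw [hcard, if_pos rfl]
    have hu0 : upot (0 : Fin d → ℤ) = 1/qrt 10000 := by
      unfold upot; rw [hQ0]; norm_num
    rw [hu0]
    unfold del0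
    simp only [nsmul_eq_mul]
    push_cast
    ring_nf
    exact le_refl _
  · rw [if_neg hx, sub_zero]
    refine hsum.trans ?_
    -- 2d/r + (3/2) Qv x / r^9 ≤ 2d * upot x
    set Q' : ℝ := Qv x + 10000 with hQ'def
    have hQ'pos : (0:ℝ) < Q' := by rw [hQ'def]; linarith
    set α : ℝ := qrt Q' with hαdef
    have hα : 0 < α := qrt_pos hQ'pos
    have hα4 : α ^ 4 = Q' := qrt_pow hQ'pos
    have hberu := bern hα hr (by rw [hα4, hr4, hQ'def, hAdef]; ring)
    have hαr : α ≤ r := by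
      rw [← pow_le_pow_iff_left₀ hα.le hr.le (by norm_num : (4:ℕ) ≠ 0), hα4, hr4, hQ'def, hAdef]
      linarith
    have h5 : 1/(4*r*r^4) ≤ 1/(4*α*r^4) := by
      apply one_div_le_one_div_of_le (by positivity)
      have := mul_le_mul_of_nonneg_right hαr (by positivity : (0:ℝ) ≤ 4*r^4)
      nlinarith [this]
    have hupot : upot x = 1/α := by
      unfold upot; rw [← hQ'def, ← hαdef]
    rw [hupot]
    have hcoef : 2*(d:ℝ) ≥ 6 := by
      have : (3:ℝ) ≤ (d:ℝ) := by exact_mod_cast hd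
      linarith
    -- (3/2) Qv x / r^9 ≤ (3/2) / r^5
    have hQA : (3/2)*(Qv x)/r^9 ≤ (3/2)/r^5 := by
      rw [div_le_div_iff₀ (by positivity) (by positivity)]
      have : Qv x ≤ r^4 := by rw [hr4, hAdef]; linarith
      nlinarith [pow_pos hr 5, pow_pos hr 9, mul_le_mul_of_nonneg_right this (pow_pos hr 5).le]
    -- 2d*(1/α) ≥ 2d/r + (3/2)/r^5
    have hmain : 2*(d:ℝ)/r + (3/2)/r^5 ≤ 2*(d:ℝ)*(1/α) := by
      have h6 : 1/α - 1/r ≥ 1/(4*r*r^4) := le_trans h5 hberu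
      have h7 : (3/2)/r^5 ≤ (2*(d:ℝ))*(1/(4*r*r^4)) := by
        have e : (2*(d:ℝ))*(1/(4*r*r^4)) = (d:ℝ)/(2*r^5) := by
          field_simp; ring
        rw [e, div_le_div_iff₀ (by positivity) (by positivity)]
        nlinarith [pow_pos hr 5, hcoef]
      have h8 : (2*(d:ℝ))*(1/α - 1/r) ≥ (2*(d:ℝ))*(1/(4*r*r^4)) := by
        apply mul_le_mul_of_nonneg_left h6 (by positivity)
      have e2 : 2*(d:ℝ)*(1/α) = 2*(d:ℝ)/r + (2*(d:ℝ))*(1/α - 1/r) := by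
        field_simp; ring
      linarith [h7, h8, e2.le, e2.ge]
    linarith [hQA, hmain]

end

/-- Wreath-product-like group recording direction-0 edge flows on `ℤ^d`. -/
structure Wd (d : ℕ) where
  a : (Fin d → ℤ) →₀ ℤ
  v : Fin d → ℤ

namespace Wd

variable {d : ℕ}

@[ext]
lemma ext' {g h : Wd d} (ha : g.a = h.a) (hv : g.v = h.v) : g = h := by
  cases g; cases h; simp_all

noncomputable def shift (v : Fin d → ℤ) (a : (Fin d → ℤ) →₀ ℤ) : (Fin d → ℤ) →₀ ℤ :=
  Finsupp.mapDomain (fun p => v + p) a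

lemma shift_add (v : Fin d → ℤ) (a b : (Fin d → ℤ) →₀ ℤ) :
    shift v (a + b) = shift v a + shift v b := Finsupp.mapDomain_add

lemma shift_neg (v : Fin d → ℤ) (a : (Fin d → ℤ) →₀ ℤ) :
    shift v (-a) = -(shift v a) :=
  map_neg (Finsupp.mapDomain.addMonoidHom (fun p => v + p)) a

lemma shift_shift (v w : Fin d → ℤ) (a : (Fin d → ℤ) →₀ ℤ) :
    shift v (shift w a) = shift (v + w) a := by
  unfold shift
  rw [← Finsupp.mapDomain_comp]
  congr 1
  funext p
  simp [add_assoc]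

lemma shift_zero_v (a : (Fin d → ℤ) →₀ ℤ) : shift 0 a = a := by
  unfold shift
  have : (fun p : Fin d → ℤ => (0:Fin d → ℤ) + p) = id := by funext p; simp
  rw [this, Finsupp.mapDomain_id]

lemma shift_zero (v : Fin d → ℤ) : shift v 0 = 0 := Finsupp.mapDomain_zero

lemma shift_single (v w : Fin d → ℤ) (n : ℤ) :
    shift v (Finsupp.single w n) = Finsupp.single (v + w) n := Finsupp.mapDomain_single

noncomputable instance : Mul (Wd d) := ⟨fun g h => ⟨g.a + shift g.v h.a, g.v + h.v⟩⟩
instance : One (Wd d) := ⟨⟨0, 0⟩⟩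
noncomputable instance : Inv (Wd d) := ⟨fun g => ⟨-(shift (-g.v) g.a), -g.v⟩⟩

lemma mul_def (g h : Wd d) : g * h = ⟨g.a + shift g.v h.a, g.v + h.v⟩ := rfl
lemma one_def : (1 : Wd d) = ⟨0, 0⟩ := rfl
lemma inv_def (g : Wd d) : g⁻¹ = ⟨-(shift (-g.v) g.a), -g.v⟩ := rfl

noncomputable instance : Group (Wd d) :=
  Group.ofLeftAxioms
    (fun g h k => by
      simp only [mul_def]
      ext <;> simp [shift_add, shift_shift, add_assoc])
    (fun g => by
      simp only [mul_def, one_def]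
      ext <;> simp [shift_zero_v])
    (fun g => by
      simp only [mul_def, inv_def, one_def]
      ext <;> simp [shift_neg, shift_shift])

def sndHom : Wd d →* Multiplicative (Fin d → ℤ) where
  toFun g := Multiplicative.ofAdd g.v
  map_one' := rfl
  map_mul' g h := rfl

lemma derived_two_eq_bot : derivedSeries (Wd d) 2 = ⊥ := by
  have h1 : derivedSeries (Wd d) 1 ≤ sndHom.ker := by
    rw [derivedSeries_one, commutator_def]
    rw [Subgroup.commutator_le]
    intro g _ h _
    rw [MonoidHom.mem_ker, map_commutatorElement]
    exact commutatorElement_eq_one_iff_mul_comm.mpr (mul_comm _ _)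
  have h2 : derivedSeries (Wd d) 2 ≤ ⊥ := by
    show ⁅derivedSeries (Wd d) 1, derivedSeries (Wd d) 1⁆ ≤ ⊥
    rw [Subgroup.commutator_le]
    intro g hg h hh
    rw [Subgroup.mem_bot]
    apply commutatorElement_eq_one_iff_mul_comm.mpr
    have hgv : g.v = 0 := h1 hg
    have hhv : h.v = 0 := h1 hh
    simp only [mul_def, hgv, hhv, shift_zero_v]
    ext <;> simp [add_comm]
  exact le_antisymm h2 bot_le

end Wd

section
variable {d : ℕ} [NeZero d]

noncomputable def gen (i : Fin d) : Wd d :=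
  ⟨if i = 0 then Finsupp.single 0 1 else 0, Pi.single i 1⟩

noncomputable def magnus : FreeGroup (Fin d) →* Wd d := FreeGroup.lift gen

lemma magnus_kills : derivedSeries (FreeGroup (Fin d)) 2 ≤ (magnus (d := d)).ker := by
  intro x hx
  have hmem : magnus x ∈ (derivedSeries (FreeGroup (Fin d)) 2).map magnus :=
    Subgroup.mem_map_of_mem _ hx
  have := map_derivedSeries_le_derivedSeries (magnus (d := d)) 2 hmem
  rw [Wd.derived_two_eq_bot, Subgroup.mem_bot] at this
  exact this

noncomputable def flowHom : Sold d →* Wd d :=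
  QuotientGroup.lift _ magnus (fun x hx => magnus_kills hx)

noncomputable def posS (g : Sold d) : Fin d → ℤ := (flowHom g).v
noncomputable def flow0 (g : Sold d) : ℤ := (flowHom g).a 0

lemma flowHom_mk (w : FreeGroup (Fin d)) :
    flowHom (QuotientGroup.mk w : Sold d) = magnus w := rfl

def evec : Fin d → ℤ := Pi.single 0 1

def incr (s : Fin d × Bool) (v : Fin d → ℤ) : ℤ :=
  if s.1 = 0 ∧ s.2 = true ∧ v = 0 then 1
  else if s.1 = 0 ∧ s.2 = false ∧ v = evec then -1 else 0

end

section
variable {d : ℕ} [NeZero d]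

lemma magnus_of (i : Fin d) : magnus (FreeGroup.of i) = gen i := FreeGroup.lift_apply_of

lemma solGen_true (i : Fin d) : solGen d (i, true) = QuotientGroup.mk (FreeGroup.of i) := by
  simp [solGen]
  rfl

lemma solGen_false (i : Fin d) :
    solGen d (i, false) = (QuotientGroup.mk (FreeGroup.of i) : Sold d)⁻¹ := by
  simp [solGen]
  rfl

lemma flowHom_mul_true (g : Sold d) (i : Fin d) :
    flowHom (g * solGen d (i, true)) = flowHom g * gen i := by
  rw [map_mul, solGen_true, flowHom_mk, magnus_of]

lemma flowHom_mul_false (g : Sold d) (i : Fin d) :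
    flowHom (g * solGen d (i, false)) = flowHom g * (gen i)⁻¹ := by
  rw [map_mul, solGen_false, map_inv, flowHom_mk, magnus_of]

lemma posS_mul (g : Sold d) (s : Fin d × Bool) :
    posS (g * solGen d s) = posS g + stepv s := by
  rcases s with ⟨i, b⟩
  cases b
  · rw [posS, flowHom_mul_false, Wd.mul_def]
    simp [Wd.inv_def, gen, posS, stepv]
  · rw [posS, flowHom_mul_true, Wd.mul_def]
    simp [gen, posS, stepv]

lemma evec_ne_zero : (evec : Fin d → ℤ) ≠ 0 := by
  intro h
  have := congrFun h 0
  simp [evec, Pi.single_eq_same] at this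

lemma flow0_mul (g : Sold d) (s : Fin d × Bool) :
    flow0 (g * solGen d s) = flow0 g + incr s (posS g) := by
  classical
  rcases s with ⟨i, b⟩
  by_cases hi : i = 0
  · subst hi
    cases b
    · -- inverse generator at direction 0
      rw [flow0, flowHom_mul_false, Wd.mul_def]
      simp only [Wd.inv_def, gen, if_pos rfl, if_true]
      rw [Wd.shift_single, Wd.shift_neg, Wd.shift_single]
      rw [Finsupp.add_apply, Finsupp.neg_apply, Finsupp.single_apply]
      have hz : (-Pi.single (0:Fin d) 1 + 0 : Fin d → ℤ) = -Pi.single 0 1 := add_zero _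
      have hcond : ((flowHom g).v + (-Pi.single (0:Fin d) 1 + 0) = 0)
          ↔ ((flowHom g).v = Pi.single 0 1) := by
        rw [hz, add_neg_eq_zero]
      simp only [flow0, posS, incr, evec, hcond]
      by_cases hp : (flowHom g).v = Pi.single (0:Fin d) 1 <;> simp [hp]
    · rw [flow0, flowHom_mul_true, Wd.mul_def]
      simp only [gen, if_pos rfl, if_true]
      rw [Wd.shift_single]
      rw [Finsupp.add_apply, Finsupp.single_apply]
      simp only [flow0, posS, incr, evec, add_zero]
      by_cases hp : (flowHom g).v = 0 <;> simp [hp]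
  · -- direction i ≠ 0 : no flow change
    cases b
    · rw [flow0, flowHom_mul_false, Wd.mul_def]
      simp [Wd.inv_def, gen, if_neg hi, Wd.shift_neg, Wd.shift_zero, flow0, incr, hi]
    · rw [flow0, flowHom_mul_true, Wd.mul_def]
      simp [gen, if_neg hi, Wd.shift_zero, flow0, incr, hi]

end

section
variable {d : ℕ} [NeZero d]

def i1 (h1 : 1 < d) : Fin d := ⟨1, h1⟩

lemma i1_ne_zero (h1 : 1 < d) : i1 h1 ≠ 0 := by
  intro h
  have := congrArg Fin.val h
  simp [i1] at this

noncomputable def celem (h1 : 1 < d) : FreeGroup (Fin d) :=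
  .of 0 * .of (i1 h1) * (.of 0)⁻¹ * (.of (i1 h1))⁻¹

lemma base_pow (a0 : (Fin d → ℤ) →₀ ℤ) (K : ℕ) :
    (⟨a0, 0⟩ : Wd d) ^ K = ⟨K • a0, 0⟩ := by
  induction K with
  | zero => rw [pow_zero, Wd.one_def]; ext <;> simp
  | succ n ih =>
      rw [pow_succ, ih, Wd.mul_def]
      ext <;> simp [Wd.shift_zero_v, succ_nsmul, add_comm]

lemma base_inv (a0 : (Fin d → ℤ) →₀ ℤ) :
    (⟨a0, 0⟩ : Wd d)⁻¹ = ⟨-a0, 0⟩ := by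
  rw [Wd.inv_def]; ext <;> simp [Wd.shift_zero_v]

lemma magnus_celem (h1 : 1 < d) :
    magnus (celem h1)
      = ⟨Finsupp.single 0 1 - Finsupp.single (Pi.single (i1 h1) 1) 1, 0⟩ := by
  have hA : magnus (FreeGroup.of (0 : Fin d)) = ⟨Finsupp.single 0 1, Pi.single 0 1⟩ := by
    rw [magnus_of]; unfold gen; rw [if_pos rfl]
  have hB : magnus (FreeGroup.of (i1 h1)) = ⟨0, Pi.single (i1 h1) 1⟩ := by
    rw [magnus_of]; unfold gen; rw [if_neg (i1_ne_zero h1)]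
  have hAB : magnus (FreeGroup.of (0:Fin d) * FreeGroup.of (i1 h1))
      = ⟨Finsupp.single 0 1, Pi.single 0 1 + Pi.single (i1 h1) 1⟩ := by
    rw [map_mul, hA, hB, Wd.mul_def]
    ext <;> simp [Wd.shift_zero]
  have hAinv : magnus ((FreeGroup.of (0:Fin d))⁻¹)
      = ⟨-(Finsupp.single (-Pi.single (0:Fin d) 1) 1), -Pi.single 0 1⟩ := by
    rw [map_inv, hA, Wd.inv_def]
    ext <;> simp [Wd.shift_single]
  have hBinv : magnus ((FreeGroup.of (i1 h1))⁻¹) = ⟨0, -Pi.single (i1 h1) 1⟩ := by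
    rw [map_inv, hB, Wd.inv_def]
    ext <;> simp [Wd.shift_zero]
  have h3 : magnus (FreeGroup.of (0:Fin d) * FreeGroup.of (i1 h1) * (FreeGroup.of (0:Fin d))⁻¹)
      = ⟨Finsupp.single 0 1 - Finsupp.single (Pi.single (i1 h1) 1) 1, Pi.single (i1 h1) 1⟩ := by
    rw [map_mul, hAB, hAinv, Wd.mul_def]
    have hidx : (Pi.single 0 1 : Fin d → ℤ) + (Pi.single (i1 h1) 1 : Fin d → ℤ)
          + -(Pi.single 0 1 : Fin d → ℤ)
        = (Pi.single (i1 h1) 1 : Fin d → ℤ) := by abel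
    rw [Wd.shift_neg, Wd.shift_single]
    refine Wd.ext' ?_ ?_
    · simp only [hidx, sub_eq_add_neg]
    · simpa using hidx
  unfold celem
  rw [map_mul, h3, hBinv, Wd.mul_def]
  ext <;> simp [Wd.shift_zero]

lemma magnus_celem_pow (h1 : 1 < d) (K : ℕ) :
    magnus ((celem h1) ^ K)
      = ⟨K • (Finsupp.single 0 1 - Finsupp.single (Pi.single (i1 h1) 1) 1), 0⟩ := by
  rw [map_pow, magnus_celem, base_pow]

lemma magnus_celem_inv_pow (h1 : 1 < d) (K : ℕ) :
    magnus ((celem h1)⁻¹ ^ K)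
      = ⟨K • (-(Finsupp.single 0 1 - Finsupp.single (Pi.single (i1 h1) 1) 1)), 0⟩ := by
  rw [map_pow, map_inv, magnus_celem, base_inv, base_pow]

lemma psingle_ne_zero (h1 : 1 < d) : (Pi.single (i1 h1) 1 : Fin d → ℤ) ≠ 0 := by
  intro h
  have := congrFun h (i1 h1)
  simp [Pi.single_eq_same] at this

lemma flow0_gK (h1 : 1 < d) (K : ℕ) :
    flow0 (QuotientGroup.mk ((celem h1) ^ K) : Sold d) = K := by
  rw [flow0, flowHom_mk, magnus_celem_pow]
  simp [Finsupp.single_apply, (psingle_ne_zero h1)]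

lemma flow0_gmK (h1 : 1 < d) (K : ℕ) :
    flow0 (QuotientGroup.mk ((celem h1)⁻¹ ^ K) : Sold d) = -(K:ℤ) := by
  rw [flow0, flowHom_mk, magnus_celem_inv_pow]
  simp [Finsupp.single_apply, (psingle_ne_zero h1)]

lemma posS_gK (h1 : 1 < d) (K : ℕ) :
    posS (QuotientGroup.mk ((celem h1) ^ K) : Sold d) = 0 := by
  rw [posS, flowHom_mk, magnus_celem_pow]

lemma posS_gmK (h1 : 1 < d) (K : ℕ) :
    posS (QuotientGroup.mk ((celem h1)⁻¹ ^ K) : Sold d) = 0 := by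
  rw [posS, flowHom_mk, magnus_celem_inv_pow]

end

noncomputable def chiLow (j : ℤ) : ℝ := min 1 (max 0 ((j:ℝ)/200000))
noncomputable def chiHigh (j : ℤ) : ℝ := min 1 (max 0 (((j:ℝ)+200000)/200000))

lemma clamp_lip (a b : ℝ) : |min 1 (max 0 a) - min 1 (max 0 b)| ≤ |a - b| := by
  have h1 : a - b ≤ |a - b| := le_abs_self _
  have h2 : -|a - b| ≤ a - b := neg_abs_le _
  rw [abs_le]
  constructor <;> simp only [min_def, max_def] <;> split_ifs <;> linarith

lemma chiLow_lip (j i : ℤ) : chiLow j - |(i:ℝ)|/200000 ≤ chiLow (j + i) := by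
  have h := clamp_lip (((j+i:ℤ):ℝ)/200000) ((j:ℝ)/200000)
  have e : ((j+i:ℤ):ℝ)/200000 - (j:ℝ)/200000 = (i:ℝ)/200000 := by push_cast; ring
  rw [e, abs_div] at h
  have : |(200000:ℝ)| = 200000 := by norm_num
  rw [this] at h
  have := abs_le.mp h
  unfold chiLow
  push_cast
  push_cast at this
  linarith [this.2]

lemma chiHigh_lip (j i : ℤ) : chiHigh (j + i) ≤ chiHigh j + |(i:ℝ)|/200000 := by
  have h := clamp_lip ((((j+i:ℤ):ℝ)+200000)/200000) (((j:ℝ)+200000)/200000)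
  have e : (((j+i:ℤ):ℝ)+200000)/200000 - ((j:ℝ)+200000)/200000 = (i:ℝ)/200000 := by
    push_cast; ring
  rw [e, abs_div] at h
  have habs : |(200000:ℝ)| = 200000 := by norm_num
  rw [habs] at h
  have := abs_le.mp h
  unfold chiHigh
  push_cast
  push_cast at this
  linarith [this.2]

section
variable {d : ℕ} [NeZero d]

noncomputable def Pop (d : ℕ) (F : Sold d → ℝ) : Sold d → ℝ :=
  fun g => (2*d:ℝ)⁻¹ * ∑ s : Fin d × Bool, F (g * solGen d s)

noncomputable def fR : Sold d → ℝ := fun g => min 1 (max 0 ((flow0 g : ℝ)))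

lemma fR_nonneg (g : Sold d) : 0 ≤ fR g :=
  le_min (by norm_num) (le_max_left _ _)

lemma fR_le_one (g : Sold d) : fR g ≤ 1 := min_le_left _ _

lemma Pop_apply (F : Sold d → ℝ) (g : Sold d) :
    Pop d F g = (2*d:ℝ)⁻¹ * ∑ s : Fin d × Bool, F (g * solGen d s) := rfl

lemma del0_pos : 0 < del0 := by
  unfold del0
  have h1 : qrt 10000 < qrt 10001 := by
    unfold qrt
    apply Real.rpow_lt_rpow (by norm_num) (by norm_num) (by norm_num)
  have h2 : 0 < qrt 10000 := qrt_pos (by norm_num)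
  have := one_div_lt_one_div_of_lt h2 h1
  linarith

noncomputable def theta (g : Sold d) : ℝ :=
  (1/(del0 * 200000)) * (upot (posS g) + upot (posS g - evec))

lemma theta_nonneg (g : Sold d) : 0 ≤ theta g := by
  unfold theta
  have := del0_pos
  have h1 := upot_pos (posS g)
  have h2 := upot_pos (posS g - evec)
  positivity

noncomputable def indf (v : Fin d → ℤ) : ℝ :=
  (if v = 0 then (1:ℝ) else 0) + (if v = evec then 1 else 0)

lemma indf_nonneg (v : Fin d → ℤ) : 0 ≤ indf v := by
  unfold indf; split_ifs <;> norm_num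

lemma sum_abs_incr (v : Fin d → ℤ) :
    (∑ s : Fin d × Bool, |(incr s v : ℝ)|) = indf v := by
  classical
  rw [Fintype.sum_prod_type]
  rw [Finset.sum_eq_single (0 : Fin d)]
  · rw [Fintype.sum_bool]
    have h0e : ¬((0:Fin d → ℤ) = evec) := fun h => evec_ne_zero (d := d) h.symm
    have he0 : ¬((evec : Fin d → ℤ) = 0) := evec_ne_zero (d := d)
    by_cases hv0 : v = 0
    · have hve : v ≠ evec := fun h => evec_ne_zero (d := d) (by rw [← h, hv0])
      simp [incr, hv0, hve, indf, h0e, he0]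
    · by_cases hve : v = evec
      · simp [incr, hv0, hve, indf, h0e, he0]
      · simp [incr, hv0, hve, indf, h0e, he0]
  · intro i _ hi
    rw [Fintype.sum_bool]
    simp [incr, hi]
  · intro h; exact absurd (Finset.mem_univ _) h

lemma card2d : (Finset.univ : Finset (Fin d × Bool)).card = 2*d := by
  rw [Finset.card_univ, Fintype.card_prod, Fintype.card_fin, Fintype.card_bool]
  ring

lemma two_d_pos : (0:ℝ) < 2*(d:ℝ) := by
  have : 0 < d := Nat.pos_of_ne_zero (NeZero.ne d)
  have : (1:ℝ) ≤ (d:ℝ) := by exact_mod_cast this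
  linarith

lemma iter_nonneg : ∀ n (g : Sold d), 0 ≤ (Pop d)^[n] fR g := by
  intro n
  induction n with
  | zero => intro g; exact fR_nonneg g
  | succ n ih =>
      intro g
      rw [Function.iterate_succ_apply']
      unfold Pop
      have hsum : (0:ℝ) ≤ ∑ s : Fin d × Bool, (Pop d)^[n] fR (g * solGen d s) :=
        Finset.sum_nonneg fun s _ => ih _
      have := two_d_pos (d := d)
      positivity

lemma iter_le_one : ∀ n (g : Sold d), (Pop d)^[n] fR g ≤ 1 := by
  intro n
  induction n with
  | zero => intro g; exact fR_le_one g
  | succ n ih =>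
      intro g
      rw [Function.iterate_succ_apply', Pop_apply]
      have hsum : (∑ s : Fin d × Bool, (Pop d)^[n] fR (g * solGen d s))
          ≤ ∑ s : Fin d × Bool, (1:ℝ) :=
        Finset.sum_le_sum fun s _ => ih _
      rw [Finset.sum_const, card2d] at hsum
      simp only [nsmul_eq_mul] at hsum
      have hpos := two_d_pos (d := d)
      rw [inv_mul_le_iff₀ hpos]
      push_cast at hsum ⊢
      linarith

lemma theta_mul (g : Sold d) (s : Fin d × Bool) :
    theta (g * solGen d s)
      = (1/(del0 * 200000)) * (upot (posS g + stepv s) + upot ((posS g - evec) + stepv s)) := by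
  unfold theta
  rw [posS_mul]
  congr 2
  · congr 1
    abel

lemma sum_theta_le (hd : 3 ≤ d) (g : Sold d) :
    (∑ s : Fin d × Bool, theta (g * solGen d s))
      ≤ 2*(d:ℝ)*theta g - (2*(d:ℝ)/200000) * indf (posS g) := by
  have hsh1 := sum_step_upot_le hd (posS g)
  have hsh2 := sum_step_upot_le hd (posS g - evec)
  have hind2 : (if posS g - evec = 0 then 2*(d:ℝ)*del0 else 0)
      = (if posS g = evec then 2*(d:ℝ)*del0 else 0) := by
    congr 1
    · simp [sub_eq_zero]
  rw [hind2] at hsh2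
  have hsum : (∑ s : Fin d × Bool, theta (g * solGen d s))
      = (1/(del0 * 200000)) * ((∑ s : Fin d × Bool, upot (posS g + stepv s))
          + (∑ s : Fin d × Bool, upot ((posS g - evec) + stepv s))) := by
    rw [Finset.sum_congr rfl (fun s _ => theta_mul g s), ← Finset.sum_add_distrib]
    rw [Finset.mul_sum]
  rw [hsum]
  have hc0 : (0:ℝ) ≤ 1/(del0 * 200000) := by
    have := del0_pos; positivity
  have hkey : ((∑ s : Fin d × Bool, upot (posS g + stepv s))
          + (∑ s : Fin d × Bool, upot ((posS g - evec) + stepv s)))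
      ≤ 2*(d:ℝ)*(upot (posS g) + upot (posS g - evec)) - 2*(d:ℝ)*del0 * indf (posS g) := by
    unfold indf
    have e1 : (if posS g = (0:Fin d → ℤ) then 2*(d:ℝ)*del0 else 0)
        = 2*(d:ℝ)*del0 * (if posS g = 0 then (1:ℝ) else 0) := by
      split_ifs <;> ring
    have e2 : (if posS g = evec then 2*(d:ℝ)*del0 else 0)
        = 2*(d:ℝ)*del0 * (if posS g = evec then (1:ℝ) else 0) := by
      split_ifs <;> ring
    rw [e1] at hsh1
    rw [e2] at hsh2
    have := add_le_add hsh1 hsh2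
    ring_nf at this ⊢
    linarith [this]
  have := mul_le_mul_of_nonneg_left hkey hc0
  refine this.trans ?_
  apply le_of_eq
  have hd0 : del0 ≠ 0 := ne_of_gt del0_pos
  unfold theta
  field_simp

lemma sum_chiLow_ge (g : Sold d) :
    2*(d:ℝ)*chiLow (flow0 g) - indf (posS g)/200000
      ≤ ∑ s : Fin d × Bool, chiLow (flow0 (g * solGen d s)) := by
  have hstep : ∀ s : Fin d × Bool,
      chiLow (flow0 g) - |(incr s (posS g):ℝ)|/200000 ≤ chiLow (flow0 (g * solGen d s)) := by
    intro s
    rw [flow0_mul]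
    exact chiLow_lip _ _
  have hsum := Finset.sum_le_sum (fun s (_ : s ∈ Finset.univ) => hstep s)
  rw [Finset.sum_sub_distrib, Finset.sum_const, card2d] at hsum
  rw [← Finset.sum_div, sum_abs_incr] at hsum
  simp only [nsmul_eq_mul] at hsum
  push_cast at hsum ⊢
  linarith [hsum]

lemma sum_chiHigh_le (g : Sold d) :
    (∑ s : Fin d × Bool, chiHigh (flow0 (g * solGen d s)))
      ≤ 2*(d:ℝ)*chiHigh (flow0 g) + indf (posS g)/200000 := by
  have hstep : ∀ s : Fin d × Bool,
      chiHigh (flow0 (g * solGen d s)) ≤ chiHigh (flow0 g) + |(incr s (posS g):ℝ)|/200000 := by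
    intro s
    rw [flow0_mul]
    exact chiHigh_lip _ _
  have hsum := Finset.sum_le_sum (fun s (_ : s ∈ Finset.univ) => hstep s)
  rw [Finset.sum_add_distrib, Finset.sum_const, card2d] at hsum
  rw [← Finset.sum_div, sum_abs_incr] at hsum
  simp only [nsmul_eq_mul] at hsum
  push_cast at hsum ⊢
  linarith [hsum]

lemma claimLow (hd : 3 ≤ d) : ∀ n (g : Sold d),
    chiLow (flow0 g) - theta g ≤ (Pop d)^[n] fR g := by
  intro n
  induction n with
  | zero =>
      intro g
      have h1 : chiLow (flow0 g) ≤ fR g := by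
        unfold chiLow fR
        rcases le_or_gt (flow0 g) 0 with h | h
        · have : ((flow0 g : ℝ))/200000 ≤ 0 := by
            apply div_nonpos_of_nonpos_of_nonneg _ (by norm_num)
            exact_mod_cast h
          have e : max 0 ((flow0 g:ℝ)/200000) = 0 := max_eq_left this
          rw [e]
          have : (0:ℝ) ≤ max 0 ((flow0 g:ℝ)) := le_max_left _ _
          simp [this]
        · have h1 : (1:ℤ) ≤ flow0 g := h
          have h1R : (1:ℝ) ≤ (flow0 g:ℝ) := by exact_mod_cast h1
          have e : max 0 ((flow0 g:ℝ)) = (flow0 g:ℝ) := max_eq_right (by linarith)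
          rw [e, min_eq_left h1R]
          exact min_le_left _ _
      have := theta_nonneg g
      simpa using by linarith
  | succ n ih =>
      intro g
      rw [Function.iterate_succ_apply']
      show chiLow (flow0 g) - theta g ≤ (2*d:ℝ)⁻¹ * ∑ s, (Pop d)^[n] fR (g * solGen d s)
      have hterm : ∀ s : Fin d × Bool,
          chiLow (flow0 (g * solGen d s)) - theta (g * solGen d s)
            ≤ (Pop d)^[n] fR (g * solGen d s) := fun s => ih _
      have hsum := Finset.sum_le_sum (fun s (_ : s ∈ Finset.univ) => hterm s)
      rw [Finset.sum_sub_distrib] at hsum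
      have h1 := sum_chiLow_ge g
      have h2 := sum_theta_le hd g
      have hpos := two_d_pos (d := d)
      have hbig : 2*(d:ℝ)*(chiLow (flow0 g) - theta g)
          ≤ ∑ s : Fin d × Bool, (Pop d)^[n] fR (g * solGen d s) := by
        have hindf := indf_nonneg (posS g)
        have hmono : 2*(d:ℝ)*chiLow (flow0 g) - indf (posS g)/200000
              - (2*(d:ℝ)*theta g - (2*(d:ℝ)/200000) * indf (posS g))
            ≤ (∑ s : Fin d × Bool, chiLow (flow0 (g * solGen d s)))
              - ∑ s : Fin d × Bool, theta (g * solGen d s) := by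
          linarith [h1, h2]
        have hcoef : 0 ≤ (2*(d:ℝ)/200000) * indf (posS g) - indf (posS g)/200000 := by
          have h6 : (6:ℝ) ≤ 2*(d:ℝ) := by
            have : (3:ℝ) ≤ (d:ℝ) := by exact_mod_cast hd
            linarith
          nlinarith [hindf]
        linarith [hmono, hsum]
      rw [inv_mul_eq_div, le_div_iff₀ hpos]
      linarith [hbig]

lemma claimHigh (hd : 3 ≤ d) : ∀ n (g : Sold d),
    (Pop d)^[n] fR g ≤ chiHigh (flow0 g) + theta g := by
  intro n
  induction n with
  | zero =>
      intro g
      have h1 : fR g ≤ chiHigh (flow0 g) := by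
        unfold chiHigh fR
        rcases le_or_gt (flow0 g) 0 with h | h
        · have hR : ((flow0 g : ℝ)) ≤ 0 := by exact_mod_cast h
          have e : max 0 ((flow0 g:ℝ)) = 0 := max_eq_left hR
          rw [e]
          have : (0:ℝ) ≤ max 0 (((flow0 g:ℝ)+200000)/200000) := le_max_left _ _
          simp [this]
        · have h1 : (1:ℤ) ≤ flow0 g := h
          have h1R : (1:ℝ) ≤ (flow0 g:ℝ) := by exact_mod_cast h1
          have e : (1:ℝ) ≤ ((flow0 g:ℝ)+200000)/200000 := by
            rw [le_div_iff₀ (by norm_num)]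
            linarith
          have e2 : (1:ℝ) ≤ max 0 (((flow0 g:ℝ)+200000)/200000) :=
            le_trans e (le_max_right _ _)
          have : min 1 (max 0 (((flow0 g:ℝ)+200000)/200000)) = 1 := min_eq_left e2
          rw [this]
          exact min_le_left _ _
      have := theta_nonneg g
      simp only [Function.iterate_zero_apply]
      linarith
  | succ n ih =>
      intro g
      rw [Function.iterate_succ_apply']
      show (2*d:ℝ)⁻¹ * ∑ s, (Pop d)^[n] fR (g * solGen d s) ≤ chiHigh (flow0 g) + theta g
      have hterm : ∀ s : Fin d × Bool,
          (Pop d)^[n] fR (g * solGen d s)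
            ≤ chiHigh (flow0 (g * solGen d s)) + theta (g * solGen d s) := fun s => ih _
      have hsum := Finset.sum_le_sum (fun s (_ : s ∈ Finset.univ) => hterm s)
      rw [Finset.sum_add_distrib] at hsum
      have h1 := sum_chiHigh_le g
      have h2 := sum_theta_le hd g
      have hpos := two_d_pos (d := d)
      have hbig : (∑ s : Fin d × Bool, (Pop d)^[n] fR (g * solGen d s))
          ≤ 2*(d:ℝ)*(chiHigh (flow0 g) + theta g) := by
        have hindf := indf_nonneg (posS g)
        have h6 : (6:ℝ) ≤ 2*(d:ℝ) := by
          have : (3:ℝ) ≤ (d:ℝ) := by exact_mod_cast hd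
          linarith
        have hcoef : 0 ≤ (2*(d:ℝ)/200000) * indf (posS g) - indf (posS g)/200000 := by
          nlinarith [hindf]
        linarith [hsum, h1, h2]
      rw [inv_mul_eq_div, div_le_iff₀ hpos]
      linarith [hbig]

end

section
variable {d : ℕ} [NeZero d]

lemma upot_zero : upot (0 : Fin d → ℤ) = 1/qrt 10000 := by
  unfold upot
  have : Qv (0 : Fin d → ℤ) = 0 := by simp [Qv]
  rw [this]; norm_num

lemma upot_neg_evec : upot (-evec : Fin d → ℤ) = 1/qrt 10001 := by
  unfold upot
  have h1 : (-evec : Fin d → ℤ) = (0 : Fin d → ℤ) + stepv ((0 : Fin d), false) := by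
    rw [zero_add]; unfold stepv evec; simp
  rw [h1, Qv_add_step]
  have : Qv (0 : Fin d → ℤ) = 0 := by simp [Qv]
  rw [this]
  norm_num

lemma qrt10000_lt : qrt 10000 ≤ qrt 10001 := by
  rw [← pow_le_pow_iff_left₀ (qrt_pos (by norm_num)).le (qrt_pos (by norm_num)).le
    (by norm_num : (4:ℕ) ≠ 0)]
  rw [qrt_pow (by norm_num), qrt_pow (by norm_num)]
  norm_num

lemma w0_le : upot (0 : Fin d → ℤ) + upot (-evec : Fin d → ℤ) ≤ 80008 * del0 := by
  rw [upot_zero, upot_neg_evec]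
  have ha : (0:ℝ) < qrt 10000 := qrt_pos (by norm_num)
  have hb : (0:ℝ) < qrt 10001 := qrt_pos (by norm_num)
  have hq : (qrt 10001) ^ (4:ℕ) = (qrt 10000) ^ (4:ℕ) + 1 := by
    rw [qrt_pow (by norm_num), qrt_pow (by norm_num)]; norm_num
  have hbern := bern ha hb hq
  have hab : qrt 10000 ≤ qrt 10001 := qrt10000_lt
  have h1 : 1/qrt 10001 ≤ 1/qrt 10000 := by
    apply one_div_le_one_div_of_le ha hab
  have h2 : (80008:ℝ) * (1 / (4 * qrt 10000 * (qrt 10001)^(4:ℕ))) = 2 / qrt 10000 := by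
    rw [qrt_pow (by norm_num : (0:ℝ) < 10001)]
    field_simp
    ring
  have h3 : (2:ℝ)/qrt 10000 ≤ 80008 * del0 := by
    rw [← h2]
    unfold del0
    have := mul_le_mul_of_nonneg_left hbern (by norm_num : (0:ℝ) ≤ 80008)
    linarith [this]
  have e : 1/qrt 10000 + 1/qrt 10001 ≤ 2/qrt 10000 := by
    rw [show (2:ℝ)/qrt 10000 = 1/qrt 10000 + 1/qrt 10000 by ring]
    linarith [h1]
  linarith [e, h3]

lemma theta_of_pos_zero (g : Sold d) (hp : posS g = 0) : theta g ≤ 80008/200000 := by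
  unfold theta
  rw [hp, zero_sub]
  have hc0 : (0:ℝ) < 1/(del0 * 200000) := by
    have := del0_pos; positivity
  have := mul_le_mul_of_nonneg_left (w0_le (d := d)) hc0.le
  refine this.trans ?_
  apply le_of_eq
  have hdel : del0 ≠ 0 := ne_of_gt del0_pos
  field_simp

lemma chiLow_200000 : chiLow ((200000:ℕ):ℤ) = 1 := by
  unfold chiLow
  norm_num

lemma chiHigh_neg200000 : chiHigh (-((200000:ℕ):ℤ)) = 0 := by
  unfold chiHigh
  norm_num

end

/-- For `d ≥ 3`, there exists a nonconstant bounded harmonic function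
for the uniform measure on the symmetric generating set `S = {x_1^{±1}, …, x_d^{±1}}` of
the free metabelian group `Sol_d`. -/
theorem exists_nonconstant_bounded_harmonic (d : ℕ) (hd : 3 ≤ d) :
    ∃ h : Sold d → ℝ,
      (∃ C : ℝ, ∀ g : Sold d, |h g| ≤ C) ∧
      (∀ g : Sold d,
        h g = (2 * d : ℝ)⁻¹ * ∑ s : Fin d × Bool, h (g * solGen d s)) ∧
      ∃ g g' : Sold d, h g ≠ h g' := by
  haveI : NeZero d := ⟨by omega⟩
  have h1d : 1 < d := by omega
  set gK : Sold d := (QuotientGroup.mk ((celem h1d) ^ 200000) : Sold d) with hgKdef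
  set gmK : Sold d := (QuotientGroup.mk ((celem h1d)⁻¹ ^ 200000) : Sold d) with hgmKdef
  have hlow : ∀ n, (119992/200000:ℝ) ≤ (Pop d)^[n] fR gK := by
    intro n
    have hc := claimLow hd n gK
    have hf : flow0 gK = ((200000:ℕ):ℤ) := flow0_gK h1d 200000
    have hp : posS gK = 0 := posS_gK h1d 200000
    have hth := theta_of_pos_zero gK hp
    rw [hf, chiLow_200000] at hc
    linarith
  have hhigh : ∀ n, (Pop d)^[n] fR gmK ≤ (80008/200000:ℝ) := by
    intro n
    have hc := claimHigh hd n gmK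
    have hf : flow0 gmK = -((200000:ℕ):ℤ) := flow0_gmK h1d 200000
    have hp : posS gmK = 0 := posS_gmK h1d 200000
    have hth := theta_of_pos_zero gmK hp
    rw [hf, chiHigh_neg200000] at hc
    linarith
  set a : ℕ → Sold d → ℝ := fun n g => (Pop d)^[n] fR g with hadef
  set ces : ℕ → Sold d → ℝ := fun n g => (n:ℝ)⁻¹ * ∑ k ∈ Finset.range n, a k g with hcesdef
  have hces01 : ∀ n g, ces n g ∈ Set.Icc (0:ℝ) 1 := by
    intro n g
    constructor
    · exact mul_nonneg (by positivity)
        (Finset.sum_nonneg fun k _ => iter_nonneg k g)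
    · rcases Nat.eq_zero_or_pos n with h0 | hpos
      · subst h0; simp [hcesdef]
      · have hn : (0:ℝ) < n := by exact_mod_cast hpos
        have hsum : ∑ k ∈ Finset.range n, a k g ≤ (n:ℝ) := by
          calc ∑ k ∈ Finset.range n, a k g ≤ ∑ k ∈ Finset.range n, (1:ℝ) :=
                Finset.sum_le_sum fun k _ => iter_le_one k g
            _ = (n:ℝ) := by rw [Finset.sum_const, Finset.card_range]; simp
        simp only [hcesdef]
        rw [inv_mul_le_iff₀ hn]
        linarith
  let U : Ultrafilter ℕ := Ultrafilter.of Filter.atTop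
  have hU : (U : Filter ℕ) ≤ Filter.atTop := Ultrafilter.of_le _
  have hex : ∀ g : Sold d, ∃ L, L ∈ Set.Icc (0:ℝ) 1 ∧
      Filter.Tendsto (fun n => ces n g) (U : Filter ℕ) (nhds L) := by
    intro g
    have hmem : Set.Icc (0:ℝ) 1 ∈ Ultrafilter.map (fun n => ces n g) U := by
      rw [Ultrafilter.mem_map]
      have : (fun n => ces n g) ⁻¹' (Set.Icc (0:ℝ) 1) = Set.univ :=
        Set.eq_univ_of_forall (fun n => hces01 n g)
      rw [this]
      exact Filter.univ_mem
    obtain ⟨L, hL, hle⟩ :=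
      isCompact_Icc.ultrafilter_le_nhds' (Ultrafilter.map (fun n => ces n g) U) hmem
    exact ⟨L, hL, by rwa [Ultrafilter.coe_map] at hle⟩
  choose h hmemh htend using hex
  refine ⟨h, ⟨1, fun g => ?_⟩, ?_, gK, gmK, ?_⟩
  · have := hmemh g
    rw [abs_le]
    exact ⟨by linarith [this.1], this.2⟩
  · intro g
    have hshift : ∀ n : ℕ, ∑ k ∈ Finset.range n, a (k+1) g
        = ∑ k ∈ Finset.range n, a k g + a n g - a 0 g := by
      intro n
      have h1 := Finset.sum_range_succ (fun k => a k g) n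
      have h2 := Finset.sum_range_succ' (fun k => a k g) n
      linarith [h1, h2]
    have hswap : ∀ n : ℕ, (2 * (d:ℕ) : ℝ)⁻¹ * ∑ s : Fin d × Bool, ces n (g * solGen d s)
        = (n:ℝ)⁻¹ * ∑ k ∈ Finset.range n, a (k+1) g := by
      intro n
      have e1 : ∑ s : Fin d × Bool, ces n (g * solGen d s)
          = (n:ℝ)⁻¹ * ∑ s : Fin d × Bool, ∑ k ∈ Finset.range n, a k (g * solGen d s) := by
        simp only [hcesdef]
        rw [Finset.mul_sum]
      rw [e1, Finset.sum_comm]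
      have e2 : ∀ k ∈ Finset.range n, (∑ s : Fin d × Bool, a k (g * solGen d s))
          = (2 * (d:ℕ) : ℝ) * a (k+1) g := by
        intro k _
        have : a (k+1) g = (2*(d:ℕ):ℝ)⁻¹ * ∑ s : Fin d × Bool, a k (g * solGen d s) := by
          simp only [hadef]
          rw [Function.iterate_succ_apply', Pop_apply]
        rw [this]
        have hpos := two_d_pos (d := d)
        field_simp
      rw [Finset.sum_congr rfl e2, ← Finset.mul_sum]
      have hpos := two_d_pos (d := d)
      have hdne : (2*(d:ℝ)) ≠ 0 := ne_of_gt hpos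
      push_cast
      field_simp
    have hid : ∀ n : ℕ, (2 * (d:ℕ) : ℝ)⁻¹ * ∑ s : Fin d × Bool, ces n (g * solGen d s)
        = ces n g + (n:ℝ)⁻¹ * (a n g - a 0 g) := by
      intro n
      rw [hswap n, hshift n]
      simp only [hcesdef]
      ring
    have herr : Filter.Tendsto (fun n : ℕ => (n:ℝ)⁻¹ * (a n g - a 0 g))
        Filter.atTop (nhds 0) := by
      apply squeeze_zero_norm (a := fun n : ℕ => (n:ℝ)⁻¹)
      · intro n
        rw [norm_mul]
        have h1 : ‖a n g - a 0 g‖ ≤ 1 := by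
          rw [Real.norm_eq_abs, abs_le]
          constructor
          · linarith [iter_nonneg (d := d) n g, iter_le_one (d := d) 0 g]
          · linarith [iter_le_one (d := d) n g, iter_nonneg (d := d) 0 g]
        have h2 : ‖((n:ℝ))⁻¹‖ = (n:ℝ)⁻¹ := by
          rw [Real.norm_eq_abs, abs_of_nonneg (by positivity)]
        calc ‖((n:ℝ))⁻¹‖ * ‖a n g - a 0 g‖ ≤ ‖((n:ℝ))⁻¹‖ * 1 :=
              mul_le_mul_of_nonneg_left h1 (norm_nonneg _)
          _ = (n:ℝ)⁻¹ := by rw [mul_one, h2]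
      · exact tendsto_inv_atTop_nhds_zero_nat
    have T2 : Filter.Tendsto (fun n => ces n g + (n:ℝ)⁻¹ * (a n g - a 0 g))
        (U : Filter ℕ) (nhds (h g + 0)) :=
      (htend g).add (herr.mono_left hU)
    have T3 : Filter.Tendsto
        (fun n => (2 * (d:ℕ) : ℝ)⁻¹ * ∑ s : Fin d × Bool, ces n (g * solGen d s))
        (U : Filter ℕ)
        (nhds ((2 * (d:ℕ) : ℝ)⁻¹ * ∑ s : Fin d × Bool, h (g * solGen d s))) := by
      apply Filter.Tendsto.const_mul
      exact tendsto_finset_sum _ (fun s _ => htend (g * solGen d s))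
    have T3' : Filter.Tendsto (fun n => ces n g + (n:ℝ)⁻¹ * (a n g - a 0 g))
        (U : Filter ℕ)
        (nhds ((2 * (d:ℕ) : ℝ)⁻¹ * ∑ s : Fin d × Bool, h (g * solGen d s))) := by
      apply Filter.Tendsto.congr (fun n => hid n) T3
    have huniq := tendsto_nhds_unique T3' T2
    rw [add_zero] at huniq
    rw [← huniq]
  · have hKb : (119992/200000:ℝ) ≤ h gK := by
      apply ge_of_tendsto (htend gK)
      have hev : ∀ᶠ n in Filter.atTop, (1:ℕ) ≤ n := Filter.eventually_ge_atTop 1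
      apply Filter.Eventually.mono (hU hev)
      intro n hn
      have hnR : (0:ℝ) < n := by exact_mod_cast hn
      have hsum : (n:ℝ) * (119992/200000) ≤ ∑ k ∈ Finset.range n, a k gK := by
        calc (n:ℝ)*(119992/200000) = ∑ k ∈ Finset.range n, (119992/200000:ℝ) := by
              rw [Finset.sum_const, Finset.card_range, nsmul_eq_mul]
          _ ≤ ∑ k ∈ Finset.range n, a k gK := Finset.sum_le_sum fun k _ => hlow k
      simp only [hcesdef]
      rw [le_inv_mul_iff₀ hnR]
      linarith
    have hmKb : h gmK ≤ (80008/200000:ℝ) := by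
      apply le_of_tendsto (htend gmK)
      have hev : ∀ᶠ n in Filter.atTop, (1:ℕ) ≤ n := Filter.eventually_ge_atTop 1
      apply Filter.Eventually.mono (hU hev)
      intro n hn
      have hnR : (0:ℝ) < n := by exact_mod_cast hn
      have hsum : ∑ k ∈ Finset.range n, a k gmK ≤ (n:ℝ) * (80008/200000) := by
        calc ∑ k ∈ Finset.range n, a k gmK ≤ ∑ k ∈ Finset.range n, (80008/200000:ℝ) :=
              Finset.sum_le_sum fun k _ => hhigh k
          _ = (n:ℝ)*(80008/200000) := by
              rw [Finset.sum_const, Finset.card_range, nsmul_eq_mul]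
      simp only [hcesdef]
      rw [inv_mul_le_iff₀ hnR]
      linarith
    intro heq
    rw [heq] at hKb
    linarith
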